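/- arXiv:1403.0967 — 2 statements merged into one kernel-verified Lean document; each statement's English description precedes it below -/
import Mathlib

section
/- Let V be a normed space of B-valued continuous functions on a compact set D̄ contained in a larger compact set D̄' with sup-norms ‖·‖_{D̄} and ‖·‖_{D̄'}, and let A' ⊆ C(D̄', B) be a subspace such that the restriction map to D̄ is injective with closed image and satisfies ‖v|_{D̄}‖_{D̄} ≥ C‖v‖_{D̄'} for all v ∈ A' and some constant C > 0 (by the open mapping theorem). Suppose moreover every v ∈ A' is Lipschitz with Lipschitz constant at most C''·‖v‖_{D̄'} for a uniform constant C'' > 0. Then for every ε with 0 < ε ≤ C/(2C''), and every ε-net S_ε ⊆ D̄, one has ‖v|_{S_ε}‖_{S_ε} ≥ (1/2)‖v|_{D̄}‖_{D̄} for all v ∈ A'; in particular the restriction map to S_ε is injective on A'|_{D̄} with closed image. -/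
/-!
At a point `x` of `K`, pick `s ∈ S` with `dist x s ≤ ε`. The Lipschitz bound and the
comparison `C · ‖v‖_{K'} ≤ ‖v‖_K` give `‖v x - v s‖ ≤ C'' ε ‖v‖_{K'} ≤ ‖v‖_K / 2`, hence
`‖v‖_K ≤ ‖v‖_S + ‖v‖_K / 2`. For the injectivity, apply this to `v - w`, which vanishes on `S`.
-/

-- For unbounded `‖v‖` on `K`, `sSup` returns the junk value `0`; the lemmas below hold regardless.
noncomputable def supOn {X : Type*} {B : Type*} [NormedAddCommGroup B]
    (K : Set X) (v : X → B) : ℝ :=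
  sSup ((fun x => ‖v x‖) '' K)

section supOn

variable {X B : Type*} [NormedAddCommGroup B] {K S : Set X} {v : X → B}

theorem supOn_nonneg : 0 ≤ supOn K v :=
  Real.sSup_nonneg (by rintro _ ⟨x, -, rfl⟩; exact norm_nonneg _)

theorem supOn_le_supOn_add {δ : ℝ} (hSK : S ⊆ K) (hδ : 0 ≤ δ)
    (h : ∀ x ∈ K, ∃ s ∈ S, ‖v x‖ ≤ ‖v s‖ + δ) : supOn K v ≤ supOn S v + δ := by
  by_cases hS : BddAbove ((fun x => ‖v x‖) '' S)
  · refine Real.sSup_le ?_ (add_nonneg supOn_nonneg hδ)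
    rintro _ ⟨x, hx, rfl⟩
    obtain ⟨s, hs, hxs⟩ := h x hx
    exact hxs.trans (add_le_add_left (le_csSup hS ⟨s, hs, rfl⟩) δ)
  · -- `‖v‖` is then unbounded on `K` as well.
    have hK : ¬BddAbove ((fun x => ‖v x‖) '' K) := fun hK => hS (hK.mono (Set.image_mono hSK))
    rw [supOn, Real.sSup_of_not_bddAbove hK]
    exact add_nonneg supOn_nonneg hδ

theorem eq_zero_of_norm_le_mul_supOn {c : ℝ} (hc : c < 1)
    (h : ∀ x ∈ K, ‖v x‖ ≤ c * supOn K v) : ∀ x ∈ K, v x = 0 := by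
  intro x hx
  have hle : supOn K v ≤ c * supOn K v :=
    csSup_le ⟨_, x, hx, rfl⟩ (by rintro _ ⟨y, hy, rfl⟩; exact h y hy)
  have hzero : supOn K v = 0 := by nlinarith [supOn_nonneg (K := K) (v := v)]
  simpa [hzero] using h x hx

end supOn

theorem norm_sub_le_half_supOn {X B : Type*} [MetricSpace X] [NormedAddCommGroup B]
    {K K' : Set X} {v : X → B} {C C'' ε : ℝ} (hC'' : 0 < C'')
    (hlow : C * supOn K' v ≤ supOn K v)
    (hlip : ∀ x ∈ K, ∀ y ∈ K, ‖v x - v y‖ ≤ C'' * supOn K' v * dist x y)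
    (hεC : ε ≤ C / (2 * C'')) {x s : X} (hx : x ∈ K) (hs : s ∈ K) (hxs : dist x s ≤ ε) :
    ‖v x - v s‖ ≤ supOn K v / 2 := by
  have hL : 0 ≤ C'' * supOn K' v := mul_nonneg hC''.le supOn_nonneg
  calc ‖v x - v s‖ ≤ C'' * supOn K' v * dist x s := hlip x hx s hs
    _ ≤ C'' * supOn K' v * (C / (2 * C'')) := by gcongr; exact hxs.trans hεC
    _ = C * supOn K' v / 2 := by field_simp
    _ ≤ supOn K v / 2 := by gcongr

theorem stmt6_general {X : Type*} [MetricSpace X] {B : Type*}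
    [NormedAddCommGroup B] [NormedSpace ℂ B]
    (K K' : Set X)
    (A' : Submodule ℂ (X → B))
    (C C'' : ℝ) (hC'' : 0 < C'')
    (hlow : ∀ v ∈ A', C * supOn K' v ≤ supOn K v)
    (hlip : ∀ v ∈ A', ∀ x ∈ K, ∀ y ∈ K,
      ‖v x - v y‖ ≤ C'' * supOn K' v * dist x y)
    (ε : ℝ) (hεC : ε ≤ C / (2 * C''))
    (S : Set X) (hSK : S ⊆ K) (hnet : ∀ x ∈ K, ∃ s ∈ S, dist x s ≤ ε) :
    (∀ v ∈ A', (1 / 2 : ℝ) * supOn K v ≤ supOn S v) ∧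
    (∀ v ∈ A', ∀ w ∈ A', (∀ s ∈ S, v s = w s) → ∀ x ∈ K, v x = w x) := by
  have hnear : ∀ v ∈ A', ∀ x ∈ K, ∃ s ∈ S, ‖v x - v s‖ ≤ supOn K v / 2 := by
    intro v hv x hx
    obtain ⟨s, hs, hxs⟩ := hnet x hx
    exact ⟨s, hs, norm_sub_le_half_supOn hC'' (hlow v hv) (hlip v hv) hεC hx (hSK hs) hxs⟩
  refine ⟨fun v hv => ?_, fun v hv w hw hvw x hx => ?_⟩
  · have := supOn_le_supOn_add (δ := supOn K v / 2) hSK (div_nonneg supOn_nonneg zero_le_two)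
      fun x hx => by
        obtain ⟨s, hs, hxs⟩ := hnear v hv x hx
        exact ⟨s, hs, (norm_le_norm_add_norm_sub' (v x) (v s)).trans (add_le_add_right hxs _)⟩
    linarith
  · have hvanish := eq_zero_of_norm_le_mul_supOn (K := K) (v := v - w) (c := 1 / 2)
      (by norm_num) fun y hy => by
        obtain ⟨s, hs, hys⟩ := hnear (v - w) (A'.sub_mem hv hw) y hy
        simpa [hvw s hs, div_eq_inv_mul] using hys
    exact sub_eq_zero.mp (hvanish x hx)

/-- Proposition 4.4: sampling inequality. If every `v ∈ A'` satisfies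
`supOn K v ≥ C · supOn K' v` and is Lipschitz on `K` with constant `C'' · supOn K' v`,
then for every `ε`-net `S ⊆ K` with `0 < ε ≤ C/(2C'')` one has
`supOn S v ≥ (1/2) · supOn K v`; in particular restriction to `S` is injective on the
restrictions to `K` of elements of `A'`. -/
theorem stmt6 {X : Type*} [MetricSpace X] {B : Type*}
    [NormedAddCommGroup B] [NormedSpace ℂ B] [CompleteSpace B]
    (K K' : Set X) (hKK' : K ⊆ K') (hK : IsCompact K) (hK' : IsCompact K')
    (A' : Submodule ℂ (X → B))
    (hcont : ∀ v ∈ A', ContinuousOn v K')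
    (C C'' : ℝ) (hC : 0 < C) (hC'' : 0 < C'')
    (hlow : ∀ v ∈ A', C * supOn K' v ≤ supOn K v)
    (hlip : ∀ v ∈ A', ∀ x ∈ K, ∀ y ∈ K,
      ‖v x - v y‖ ≤ C'' * supOn K' v * dist x y)
    (ε : ℝ) (hε : 0 < ε) (hεC : ε ≤ C / (2 * C''))
    (S : Set X) (hSK : S ⊆ K) (hnet : ∀ x ∈ K, ∃ s ∈ S, dist x s ≤ ε) :
    (∀ v ∈ A', (1 / 2 : ℝ) * supOn K v ≤ supOn S v) ∧
    (∀ v ∈ A', ∀ w ∈ A', (∀ s ∈ S, v s = w s) → ∀ x ∈ K, v x = w x) :=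
  stmt6_general K K' A' C C'' hC'' hlow hlip ε hεC S hSK hnet
end

section
/- Let G, H : Z → Z and ∂ : Z → Z be continuous linear maps on a Fréchet space Z with ω = ∂Gω + Hω for all ω in a closed subspace 𝒵 ⊆ Z with ∂(𝒵-preimages) ⊆ 𝒵, and suppose H(∂ξ) = 0 for all ξ. Then the map ∂G ⊕ H : 𝒵 → ℬ ⊕ ℋ, where ℬ := ∂G(𝒵) and ℋ := H(𝒵), is an isomorphism of Fréchet spaces with inverse (η, χ) ↦ η + χ; in particular ℬ = {ω ∈ 𝒵 : Hω = 0} is closed and 𝒵/ℬ ≅ ℋ. -/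
/-! On `𝒵` the operators `P = ∂G` and `H` are complementary projections: `H ∘ P = 0` because
`H ∘ ∂ = 0`, and together with `P + H = id` this forces `H² = H`, `P² = P` and `P ∘ H = 0`.
Hence `P(𝒵) = 𝒵 ∩ ker H` is closed, the restrictions of `P` and `H` invert the addition map
`P(𝒵) × H(𝒵) → 𝒵`, and `H` descends to an isomorphism `𝒵 / P(𝒵) ≅ H(𝒵)`. -/

namespace Submodule

variable {R M : Type*} [Ring R] [AddCommGroup M] [Module R M] [TopologicalSpace M]

structure IsComplProjections (V : Submodule R M) (P Q : M →L[R] M) : Prop where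
  add_apply_eq_self : ∀ x ∈ V, P x + Q x = x
  right_apply_mem : ∀ x ∈ V, Q x ∈ V
  right_apply_left_apply : ∀ x ∈ V, Q (P x) = 0

namespace IsComplProjections

variable {V : Submodule R M} {P Q : M →L[R] M}

theorem left_apply_eq_sub (h : IsComplProjections V P Q) {x : M} (hx : x ∈ V) :
    P x = x - Q x :=
  eq_sub_of_add_eq (h.add_apply_eq_self x hx)

theorem left_apply_mem (h : IsComplProjections V P Q) {x : M} (hx : x ∈ V) : P x ∈ V := by
  rw [h.left_apply_eq_sub hx]
  exact V.sub_mem hx (h.right_apply_mem x hx)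

theorem map_left_le (h : IsComplProjections V P Q) : V.map (P : M →ₗ[R] M) ≤ V := by
  rintro _ ⟨x, hx, rfl⟩
  exact h.left_apply_mem hx

theorem map_right_le (h : IsComplProjections V P Q) : V.map (Q : M →ₗ[R] M) ≤ V := by
  rintro _ ⟨x, hx, rfl⟩
  exact h.right_apply_mem x hx

theorem map_left_eq_inf_ker (h : IsComplProjections V P Q) :
    V.map (P : M →ₗ[R] M) = V ⊓ LinearMap.ker (Q : M →ₗ[R] M) := by
  ext y
  constructor
  · rintro ⟨x, hx, rfl⟩
    exact ⟨h.left_apply_mem hx, h.right_apply_left_apply x hx⟩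
  · rintro ⟨hy, hQy : Q y = 0⟩
    refine ⟨y, hy, ?_⟩
    simpa [hQy] using h.add_apply_eq_self y hy

theorem isClosed_map_left (h : IsComplProjections V P Q) [T1Space M] (hV : IsClosed (V : Set M)) :
    IsClosed (V.map (P : M →ₗ[R] M) : Set M) := by
  rw [h.map_left_eq_inf_ker]
  exact hV.inter (isClosed_singleton.preimage Q.continuous)

theorem apply_of_mem_map_left (h : IsComplProjections V P Q) {y : M}
    (hy : y ∈ V.map (P : M →ₗ[R] M)) :
    P y = y ∧ Q y = 0 := by
  rw [h.map_left_eq_inf_ker] at hy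
  obtain ⟨hyV, hQy : Q y = 0⟩ := hy
  exact ⟨by simpa [hQy] using h.left_apply_eq_sub hyV, hQy⟩

theorem apply_of_mem_map_right (h : IsComplProjections V P Q) {y : M}
    (hy : y ∈ V.map (Q : M →ₗ[R] M)) :
    P y = 0 ∧ Q y = y := by
  obtain ⟨x, hx, rfl⟩ := hy
  have hQQ : Q (Q x) = Q x := by
    conv_lhs => rw [eq_sub_of_add_eq' (h.add_apply_eq_self x hx)]
    rw [map_sub, h.right_apply_left_apply x hx, sub_zero]
  refine ⟨?_, hQQ⟩
  show P (Q x) = 0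
  rw [h.left_apply_eq_sub (h.right_apply_mem x hx), hQQ, sub_self]

def quotientEquiv (h : IsComplProjections V P Q) :
    (V ⧸ (V.map (P : M →ₗ[R] M)).comap V.subtype) ≃L[R] V.map (Q : M →ₗ[R] M) :=
  .equivOfInverse
    (liftQL _ (Q.restrict fun x hx => mem_map_of_mem hx) fun y hy =>
      Subtype.ext (h.apply_of_mem_map_left hy).2)
    (mkQL _ ∘L ((V.map _).subtypeL.codRestrict V fun z => h.map_right_le z.2))
    (by
      rintro ⟨x⟩
      refine (Submodule.Quotient.eq _).2 ?_
      show Q x - x ∈ V.map (P : M →ₗ[R] M)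
      rw [← neg_sub, ← h.left_apply_eq_sub x.2]
      exact neg_mem (mem_map_of_mem x.2))
    (fun z => Subtype.ext (h.apply_of_mem_map_right z.2).2)

theorem coe_quotientEquiv_apply_mk (h : IsComplProjections V P Q) (x : V) :
    (h.quotientEquiv (Submodule.Quotient.mk x) : M) = Q x :=
  rfl

section ContinuousAdd

variable [ContinuousAdd M]

def prodEquiv (h : IsComplProjections V P Q) :
    (V.map (P : M →ₗ[R] M) × V.map (Q : M →ₗ[R] M)) ≃L[R] V :=
  .equivOfInverse
    (((V.map _).subtypeL.coprod (V.map _).subtypeL).codRestrict V fun y =>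
      V.add_mem (h.map_left_le y.1.2) (h.map_right_le y.2.2))
    ((P.restrict fun x hx => mem_map_of_mem hx).prod (Q.restrict fun x hx => mem_map_of_mem hx))
    (by
      rintro ⟨⟨y, hy⟩, ⟨z, hz⟩⟩
      obtain ⟨hPy, hQy⟩ := h.apply_of_mem_map_left hy
      obtain ⟨hPz, hQz⟩ := h.apply_of_mem_map_right hz
      ext
      · show P (y + z) = y
        rw [map_add, hPy, hPz, add_zero]
      · show Q (y + z) = z
        rw [map_add, hQy, hQz, zero_add])
    (fun x => Subtype.ext (h.add_apply_eq_self x x.2))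

theorem coe_prodEquiv_apply (h : IsComplProjections V P Q)
    (y : V.map (P : M →ₗ[R] M) × V.map (Q : M →ₗ[R] M)) :
    (h.prodEquiv y : M) = y.1 + y.2 :=
  rfl

end ContinuousAdd

end IsComplProjections

end Submodule

theorem stmt18_general {Z : Type*}
    [AddCommGroup Z] [Module ℂ Z] [UniformSpace Z] [IsUniformAddGroup Z]
    [T2Space Z]
    (d G H : Z →L[ℂ] Z) (𝒵 : Submodule ℂ Z) (h𝒵cl : IsClosed (𝒵 : Set Z))
    (hdec : ∀ ω ∈ 𝒵, ω = d (G ω) + H ω)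
    (hHd : ∀ ξ : Z, H (d ξ) = 0)
    (hH : ∀ ω ∈ 𝒵, H ω ∈ 𝒵) :
    letI ℬ : Submodule ℂ Z := 𝒵.map ((d.comp G : Z →L[ℂ] Z) : Z →ₗ[ℂ] Z)
    letI ℋ : Submodule ℂ Z := 𝒵.map ((H : Z →L[ℂ] Z) : Z →ₗ[ℂ] Z)
    (ℬ = 𝒵 ⊓ LinearMap.ker ((H : Z →L[ℂ] Z) : Z →ₗ[ℂ] Z)) ∧
    IsClosed (ℬ : Set Z) ∧
    (∃ e : (↥ℬ × ↥ℋ) ≃L[ℂ] ↥𝒵,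
      ∀ x : ↥ℬ × ↥ℋ, ((e x : Z) = (x.1 : Z) + (x.2 : Z))) ∧
    (∃ e' : (↥𝒵 ⧸ (ℬ.comap 𝒵.subtype)) ≃L[ℂ] ↥ℋ,
      ∀ ω : ↥𝒵, ((e' (Submodule.Quotient.mk ω) : Z) = H (ω : Z))) := by
  have h : 𝒵.IsComplProjections (d.comp G) H :=
    ⟨fun ω hω => (hdec ω hω).symm, hH, fun ω _ => hHd (G ω)⟩
  exact ⟨h.map_left_eq_inf_ker, h.isClosed_map_left h𝒵cl,
    ⟨h.prodEquiv, h.coe_prodEquiv_apply⟩, ⟨h.quotientEquiv, h.coe_quotientEquiv_apply_mk⟩⟩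

/-- Kohn decomposition of the space of closed forms. If
`ω = ∂Gω + Hω` holds on a closed subspace `𝒵` of a Fréchet space `Z`, with `H ∘ ∂ = 0`,
then with `ℬ := ∂G(𝒵)` and `ℋ := H(𝒵)` one has `ℬ = {ω ∈ 𝒵 : Hω = 0}`, `ℬ` is closed,
the map `(η, χ) ↦ η + χ` is a continuous linear isomorphism `ℬ × ℋ ≅ 𝒵` (with inverse
`∂G ⊕ H`), and `𝒵/ℬ ≅ ℋ`. -/
theorem stmt18 {Z : Type*}
    [AddCommGroup Z] [Module ℂ Z] [UniformSpace Z] [IsUniformAddGroup Z]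
    [ContinuousSMul ℂ Z] [CompleteSpace Z] [T2Space Z]
    (d G H : Z →L[ℂ] Z) (𝒵 : Submodule ℂ Z) (h𝒵cl : IsClosed (𝒵 : Set Z))
    (hdec : ∀ ω ∈ 𝒵, ω = d (G ω) + H ω)
    (hHd : ∀ ξ : Z, H (d ξ) = 0)
    (hdG : ∀ ω ∈ 𝒵, d (G ω) ∈ 𝒵) (hH : ∀ ω ∈ 𝒵, H ω ∈ 𝒵) :
    letI ℬ : Submodule ℂ Z := 𝒵.map ((d.comp G : Z →L[ℂ] Z) : Z →ₗ[ℂ] Z)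
    letI ℋ : Submodule ℂ Z := 𝒵.map ((H : Z →L[ℂ] Z) : Z →ₗ[ℂ] Z)
    (ℬ = 𝒵 ⊓ LinearMap.ker ((H : Z →L[ℂ] Z) : Z →ₗ[ℂ] Z)) ∧
    IsClosed (ℬ : Set Z) ∧
    (∃ e : (↥ℬ × ↥ℋ) ≃L[ℂ] ↥𝒵,
      ∀ x : ↥ℬ × ↥ℋ, ((e x : Z) = (x.1 : Z) + (x.2 : Z))) ∧
    (∃ e' : (↥𝒵 ⧸ (ℬ.comap 𝒵.subtype)) ≃L[ℂ] ↥ℋ,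
      ∀ ω : ↥𝒵, ((e' (Submodule.Quotient.mk ω) : Z) = H (ω : Z))) :=
  stmt18_general d G H 𝒵 h𝒵cl hdec hHd hH
end
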